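/- The number of covering relations (edges of the Hasse diagram) of the poset D*(l_d) of duplicative forests above the d-ladder equals c(d), where c(0) = 0 and c(d) = c(d-1) + b(d-1) + 2 c(d-1) b(d-1), with b(0) = 1 and b(n) = b(n-1) + b(n-1)^2. The first values of c are 0, 0, 1, 7, 97, 8287. -/

import Mathlib

mutual
  /-- A duplicative tree: a node colored white (`false`) or black (`true`) with a forest of children. -/
  inductive DTree : Type
    | node : Bool → DForest → DTree
  /-- A duplicative forest: a finite sequence of duplicative trees. -/
  inductive DForest : Type
    | nil : DForest
    | cons : DTree → DForest → DForest
end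

def DForest.append : DForest → DForest → DForest
  | .nil, g => g
  | .cons t f, g => .cons t (f.append g)

mutual
  /-- One duplication step inside a tree. -/
  inductive TStep : DTree → DTree → Prop
    | dup (c : DForest) : TStep (.node false c) (.node true (c.append c))
    | congr (b : Bool) {c c' : DForest} : FStep c c' → TStep (.node b c) (.node b c')
  /-- One duplication step inside a forest. -/
  inductive FStep : DForest → DForest → Prop
    | head {t t' : DTree} (f : DForest) : TStep t t' → FStep (.cons t f) (.cons t' f)
    | tail (t : DTree) {f f' : DForest} : FStep f f' → FStep (.cons t f) (.cons t f')
end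

/-- Duplication order on forests. -/
def FLe : DForest → DForest → Prop := Relation.ReflTransGen FStep

mutual
  /-- Number of black nodes of a tree. -/
  def DTree.black : DTree → ℕ
    | .node b c => (cond b 1 0) + DForest.black c
  /-- Number of black nodes of a forest. -/
  def DForest.black : DForest → ℕ
    | .nil => 0
    | .cons t f => DTree.black t + DForest.black f
end

/-- The d-ladder. -/
def ladder : ℕ → DForest
  | 0 => .nil
  | d + 1 => .cons (.node false (ladder d)) .nil

/-- b(0) = 1, b(n) = b(n-1) + b(n-1)², the cardinality of D*(l_d). -/
def seqB : ℕ → ℕ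
  | 0 => 1
  | n + 1 => seqB n + (seqB n) ^ 2

/-- c(0) = 0, c(d) = c(d-1) + b(d-1) + 2 c(d-1) b(d-1). -/
def seqC : ℕ → ℕ
  | 0 => 0
  | d + 1 => seqC d + seqB d + 2 * seqC d * seqB d


/-!
Every forest above `ladder (d + 1)` is a single root: either a white root over some
`c ≥ ladder d`, or a black root over `f ++ g` with `f, g ≥ ladder d` (all of the same length, so
`f` and `g` can be read off). The order is that of `D*(l_d)` on white roots and the product order
on black roots, no black root lies below a white one, and a white root `c` lies below a black root
`f ++ g` iff `c ≤ f` and `c ≤ g`. So the covering pairs of `D*(l_{d+1})` are the covers among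
white roots, the duplications `c ⋖ c ++ c`, and the covers of the product `D*(l_d)²`, which gives
`c(d+1) = c(d) + b(d) + 2 c(d) b(d)`, while `b(d+1) = b(d) + b(d)²`.
-/
open Set

namespace DForest

def len : DForest → ℕ
  | .nil => 0
  | .cons _ f => f.len + 1

theorem black_append : ∀ f g : DForest, (f.append g).black = f.black + g.black
  | .nil, g => by simp [append, DForest.black]
  | .cons t f, g => by simp [append, DForest.black, black_append f g]; omega

theorem append_inj_of_len_eq : ∀ {f f' g g' : DForest}, f.len = f'.len →
    f.append g = f'.append g' → f = f' ∧ g = g'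
  | .nil, .nil, _, _, _, h => ⟨rfl, h⟩
  | .cons _ _, .cons _ _, _, _, hl, h => by
    simp only [append, cons.injEq] at h
    obtain ⟨rfl, rfl⟩ := append_inj_of_len_eq (by simpa [len] using hl) h.2
    exact ⟨by rw [h.1], rfl⟩

def whiteNode (c : DForest) : DForest := .cons (.node false c) .nil

def blackNode (f g : DForest) : DForest := .cons (.node true (f.append g)) .nil

theorem whiteNode_injective : Function.Injective whiteNode := by
  intro c c' h
  simpa [whiteNode] using h

theorem whiteNode_ne_blackNode (c f g : DForest) : whiteNode c ≠ blackNode f g := by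
  simp [whiteNode, blackNode]

theorem blackNode_inj {f g f' g' : DForest} (h : f.len = f'.len) :
    blackNode f g = blackNode f' g' ↔ f = f' ∧ g = g' := by
  refine ⟨fun he => append_inj_of_len_eq h ?_, by rintro ⟨rfl, rfl⟩; rfl⟩
  simpa [blackNode] using he

end DForest

open DForest

mutual
theorem TStep.black_lt : ∀ {t t' : DTree}, TStep t t' → t.black < t'.black
  | _, _, .dup c => by simp [DTree.black, black_append]; omega
  | _, _, .congr _ h => by have := h.black_lt; simp [DTree.black]; omega
theorem FStep.black_lt : ∀ {f f' : DForest}, FStep f f' → f.black < f'.black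
  | _, _, .head _ h => by have := h.black_lt; simp [DForest.black]; omega
  | _, _, .tail _ h => by have := h.black_lt; simp [DForest.black]; omega
end

theorem FStep.len_eq : ∀ {f f' : DForest}, FStep f f' → f.len = f'.len
  | _, _, .head _ _ => rfl
  | _, _, .tail _ h => by simp [len, h.len_eq]


theorem FStep.append_left : ∀ {f f' : DForest} (g : DForest), FStep f f' →
    FStep (f.append g) (f'.append g)
  | _, _, _, .head _ h => .head _ h
  | _, _, g, .tail t h => .tail t (h.append_left g)

theorem FStep.append_right : ∀ (f : DForest) {g g' : DForest}, FStep g g' →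
    FStep (f.append g) (f.append g')
  | .nil, _, _, h => h
  | .cons t f, _, _, h => .tail t (FStep.append_right f h)

theorem FStep.append_cases : ∀ {f g x : DForest}, FStep (f.append g) x →
    (∃ f', FStep f f' ∧ x = f'.append g) ∨ ∃ g', FStep g g' ∧ x = f.append g'
  | .nil, _, _, h => .inr ⟨_, h, rfl⟩
  | .cons _ _, _, _, .head _ h => .inl ⟨_, .head _ h, rfl⟩
  | .cons t _, _, _, .tail _ h => by
    rcases FStep.append_cases h with ⟨f', hf, rfl⟩ | ⟨g', hg, rfl⟩
    · exact .inl ⟨.cons t f', .tail t hf, rfl⟩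
    · exact .inr ⟨g', hg, rfl⟩

theorem FStep.whiteNode_cases {c x : DForest} :
    FStep (whiteNode c) x → x = blackNode c c ∨ ∃ c', FStep c c' ∧ x = whiteNode c'
  | .head _ (.dup _) => .inl rfl
  | .head _ (.congr _ h) => .inr ⟨_, h, rfl⟩

theorem FStep.blackNode_cases {f g x : DForest} :
    FStep (blackNode f g) x →
      (∃ f', FStep f f' ∧ x = blackNode f' g) ∨ ∃ g', FStep g g' ∧ x = blackNode f g'
  | .head _ (.congr _ h) => by
    rcases h.append_cases with ⟨f', hf, rfl⟩ | ⟨g', hg, rfl⟩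
    · exact .inl ⟨f', hf, rfl⟩
    · exact .inr ⟨g', hg, rfl⟩

theorem FLe.black_le {f g : DForest} (h : FLe f g) : f.black ≤ g.black := by
  induction h with
  | refl => rfl
  | tail _ hs ih => exact ih.trans hs.black_lt.le

theorem FLe.eq_of_black_le {f g : DForest} (h : FLe f g) (hb : g.black ≤ f.black) : f = g := by
  rcases h.cases_tail with rfl | ⟨e, hfe, heg⟩
  · rfl
  · exact absurd hb ((FLe.black_le hfe).trans_lt heg.black_lt).not_ge

instance : PartialOrder DForest where
  le := FLe
  le_refl _ := .refl
  le_trans _ _ _ := .trans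
  le_antisymm _ _ h h' := h.eq_of_black_le h'.black_le

namespace DForest

theorem len_eq_of_le {f g : DForest} (h : f ≤ g) : f.len = g.len := by
  induction h with
  | refl => rfl
  | tail _ hs ih => exact ih.trans hs.len_eq

theorem eq_nil_of_nil_le {f : DForest} (h : nil ≤ f) : f = nil := by
  induction h with
  | refl => rfl
  | tail _ hs ih => subst ih; nomatch hs

theorem append_le_append {f f' g g' : DForest} (hf : f ≤ f') (hg : g ≤ g') :
    f.append g ≤ f'.append g' :=
  le_trans
    (Relation.ReflTransGen.lift (·.append g) (fun _ _ h => FStep.append_left g h) _ _ hf)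
    (Relation.ReflTransGen.lift f'.append (fun _ _ h => FStep.append_right f' h) _ _ hg)

theorem whiteNode_mono {c c' : DForest} (h : c ≤ c') : whiteNode c ≤ whiteNode c' :=
  Relation.ReflTransGen.lift whiteNode (fun _ _ h => FStep.head _ (.congr false h)) _ _ h

theorem blackNode_mono {f g f' g' : DForest} (hf : f ≤ f') (hg : g ≤ g') :
    blackNode f g ≤ blackNode f' g' :=
  Relation.ReflTransGen.lift (fun c => DForest.cons (.node true c) .nil)
    (fun _ _ h => FStep.head _ (.congr true h)) _ _ (append_le_append hf hg)

theorem whiteNode_lt_blackNode (c : DForest) : whiteNode c < blackNode c c :=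
  lt_of_le_of_ne (.single (.head _ (.dup c))) (whiteNode_ne_blackNode c c c)

theorem blackNode_le_cases {f g x : DForest} (h : blackNode f g ≤ x) :
    ∃ f' g', f.len = f'.len ∧ f ≤ f' ∧ g ≤ g' ∧ x = blackNode f' g' := by
  induction h with
  | refl => exact ⟨f, g, rfl, le_rfl, le_rfl, rfl⟩
  | tail _ hs ih =>
    obtain ⟨f', g', hl, hf, hg, rfl⟩ := ih
    rcases hs.blackNode_cases with ⟨f'', hs', rfl⟩ | ⟨g'', hs', rfl⟩
    · exact ⟨f'', g', hl.trans hs'.len_eq, hf.tail hs', hg, rfl⟩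
    · exact ⟨f', g'', hl, hf, hg.tail hs', rfl⟩

theorem whiteNode_le_cases {c x : DForest} (h : whiteNode c ≤ x) :
    (∃ c', c ≤ c' ∧ x = whiteNode c') ∨
      ∃ f g, c.len = f.len ∧ c ≤ f ∧ c ≤ g ∧ x = blackNode f g := by
  induction h with
  | refl => exact .inl ⟨c, le_rfl, rfl⟩
  | tail _ hs ih =>
    rcases ih with ⟨c', hc, rfl⟩ | ⟨f, g, hl, hf, hg, rfl⟩
    · rcases hs.whiteNode_cases with rfl | ⟨c'', hs', rfl⟩
      · exact .inr ⟨c', c', len_eq_of_le hc, hc, hc, rfl⟩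
      · exact .inl ⟨c'', hc.tail hs', rfl⟩
    · rcases hs.blackNode_cases with ⟨f', hs', rfl⟩ | ⟨g', hs', rfl⟩
      · exact .inr ⟨f', g, hl.trans hs'.len_eq, hf.tail hs', hg, rfl⟩
      · exact .inr ⟨f, g', hl, hf, hg.tail hs', rfl⟩

theorem whiteNode_le_whiteNode_iff {c c' : DForest} :
    whiteNode c ≤ whiteNode c' ↔ c ≤ c' := by
  refine ⟨fun h => ?_, whiteNode_mono⟩
  rcases whiteNode_le_cases h with ⟨c'', hc, he⟩ | ⟨f, g, -, -, -, he⟩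
  · rwa [whiteNode_injective he]
  · exact absurd he (whiteNode_ne_blackNode _ _ _)

theorem not_blackNode_le_whiteNode (f g c : DForest) : ¬ blackNode f g ≤ whiteNode c := by
  intro h
  obtain ⟨f', g', -, -, -, he⟩ := blackNode_le_cases h
  exact whiteNode_ne_blackNode _ _ _ he

theorem blackNode_le_blackNode_iff {f g f' g' : DForest} (hl : f.len = f'.len) :
    blackNode f g ≤ blackNode f' g' ↔ f ≤ f' ∧ g ≤ g' := by
  refine ⟨fun h => ?_, fun h => blackNode_mono h.1 h.2⟩
  obtain ⟨f'', g'', hl', hf, hg, he⟩ := blackNode_le_cases h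
  obtain ⟨rfl, rfl⟩ := (blackNode_inj (hl.symm.trans hl')).1 he
  exact ⟨hf, hg⟩

theorem whiteNode_le_blackNode_iff {c f g : DForest} (hl : c.len = f.len) :
    whiteNode c ≤ blackNode f g ↔ c ≤ f ∧ c ≤ g := by
  refine ⟨fun h => ?_, fun h => (whiteNode_lt_blackNode c).le.trans (blackNode_mono h.1 h.2)⟩
  rcases whiteNode_le_cases h with ⟨_, _, he⟩ | ⟨f', g', hl', hf, hg, he⟩
  · exact absurd he.symm (whiteNode_ne_blackNode _ _ _)
  · obtain ⟨rfl, rfl⟩ := (blackNode_inj (hl.symm.trans hl')).1 he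
    exact ⟨hf, hg⟩

theorem whiteNode_covBy_whiteNode_iff {c c' : DForest} :
    whiteNode c ⋖ whiteNode c' ↔ c ⋖ c' :=
  Set.OrdConnected.apply_covBy_apply_iff
    (.ofMapLEIff whiteNode fun _ _ => whiteNode_le_whiteNode_iff)
    ⟨by
      rintro _ ⟨a, rfl⟩ _ ⟨b, rfl⟩ z ⟨haz, hzb⟩
      rcases whiteNode_le_cases haz with ⟨c', -, rfl⟩ | ⟨f, g, -, -, -, rfl⟩
      · exact ⟨c', rfl⟩
      · exact absurd hzb (not_blackNode_le_whiteNode _ _ _)⟩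

theorem whiteNode_covBy_blackNode_iff {c f g : DForest} (hl : c.len = f.len) :
    whiteNode c ⋖ blackNode f g ↔ f = c ∧ g = c := by
  constructor
  · intro h
    obtain ⟨hcf, hcg⟩ := (whiteNode_le_blackNode_iff hl).1 h.le
    rcases h.eq_or_eq (whiteNode_lt_blackNode c).le (blackNode_mono hcf hcg) with he | he
    · exact absurd he.symm (whiteNode_ne_blackNode _ _ _)
    · obtain ⟨rfl, rfl⟩ := (blackNode_inj hl).1 he
      exact ⟨rfl, rfl⟩
  · rintro ⟨rfl, rfl⟩
    refine covBy_iff_lt_and_eq_or_eq.2 ⟨whiteNode_lt_blackNode _, fun z hz hz' => ?_⟩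
    rcases whiteNode_le_cases hz with ⟨c', hc, rfl⟩ | ⟨f', g', hl', hf, hg, rfl⟩
    · obtain ⟨hc', -⟩ := (whiteNode_le_blackNode_iff (len_eq_of_le hc).symm).1 hz'
      exact .inl (by rw [le_antisymm hc' hc])
    · obtain ⟨hf', hg'⟩ := (blackNode_le_blackNode_iff hl'.symm).1 hz'
      exact .inr (by rw [le_antisymm hf' hf, le_antisymm hg' hg])

def blackNodeEmbedding (n : ℕ) : {p : DForest × DForest // p.1.len = n} ↪o DForest :=
  .ofMapLEIff (fun p => blackNode p.1.1 p.1.2) fun p q =>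
    blackNode_le_blackNode_iff (p.2.trans q.2.symm)

theorem blackNode_covBy_blackNode_iff {f g f' g' : DForest} (hl : f.len = f'.len) :
    blackNode f g ⋖ blackNode f' g' ↔ (f, g) ⋖ (f', g') := by
  have hrange : IsUpperSet (range (blackNodeEmbedding f.len)) := by
    rintro _ z hz ⟨⟨⟨a, b⟩, ha⟩, rfl⟩
    obtain ⟨a', b', hl', -, -, rfl⟩ := blackNode_le_cases hz
    exact ⟨⟨(a', b'), hl'.symm.trans ha⟩, rfl⟩
  have hlen : IsUpperSet {p : DForest × DForest | p.1.len = f.len} :=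
    fun p q hpq hp => (len_eq_of_le hpq.1).symm.trans hp
  refine (hrange.ordConnected.apply_covBy_apply_iff (blackNodeEmbedding f.len)
    (a := ⟨(f, g), rfl⟩) (b := ⟨(f', g'), hl.symm⟩)).trans
    (Set.OrdConnected.apply_covBy_apply_iff (OrderEmbedding.subtype _) ?_).symm
  simpa using hlen.ordConnected

end DForest

theorem ladder_succ (d : ℕ) : ladder (d + 1) = whiteNode (ladder d) := rfl

theorem len_eq_of_ladder_le {d : ℕ} {f g : DForest} (hf : ladder d ≤ f) (hg : ladder d ≤ g) :
    f.len = g.len :=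
  (len_eq_of_le hf).symm.trans (len_eq_of_le hg)

theorem ladder_succ_le_blackNode {d : ℕ} {f g : DForest} (hf : ladder d ≤ f)
    (hg : ladder d ≤ g) : ladder (d + 1) ≤ blackNode f g :=
  (whiteNode_le_blackNode_iff (len_eq_of_le hf)).2 ⟨hf, hg⟩

theorem Ici_ladder_zero : Ici (ladder 0) = {nil} :=
  Set.ext fun _ => ⟨eq_nil_of_nil_le, fun h => (Set.mem_singleton_iff.1 h).symm ▸ le_refl nil⟩

def iciLadderSuccOfSum (d : ℕ) :
    Ici (ladder d) ⊕ Ici (ladder d) × Ici (ladder d) → Ici (ladder (d + 1)) :=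
  Sum.elim (fun c => ⟨whiteNode c, whiteNode_mono c.2⟩)
    fun p => ⟨blackNode p.1 p.2, ladder_succ_le_blackNode p.1.2 p.2.2⟩

theorem iciLadderSuccOfSum_bijective (d : ℕ) : Function.Bijective (iciLadderSuccOfSum d) := by
  refine ⟨.sumElim ?_ ?_ ?_, ?_⟩
  · intro c c' h
    exact Subtype.ext (whiteNode_injective (congrArg Subtype.val h))
  · rintro ⟨f, g⟩ ⟨f', g'⟩ h
    obtain ⟨hf, hg⟩ := (blackNode_inj (len_eq_of_ladder_le f.2 f'.2)).1 (congrArg Subtype.val h)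
    exact Prod.ext (Subtype.ext hf) (Subtype.ext hg)
  · intro c p h
    exact whiteNode_ne_blackNode _ _ _ (congrArg Subtype.val h)
  · rintro ⟨x, hx⟩
    rcases whiteNode_le_cases hx with ⟨c, hc, rfl⟩ | ⟨f, g, -, hf, hg, rfl⟩
    · exact ⟨.inl ⟨c, hc⟩, rfl⟩
    · exact ⟨.inr (⟨f, hf⟩, ⟨g, hg⟩), rfl⟩

instance finite_Ici_ladder : ∀ d, Finite (Ici (ladder d))
  | 0 => by rw [Ici_ladder_zero]; infer_instance
  | d + 1 =>
    have := finite_Ici_ladder d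
    .of_surjective _ (iciLadderSuccOfSum_bijective d).2

theorem card_Ici_ladder : ∀ d, Nat.card (Ici (ladder d)) = seqB d
  | 0 => by rw [Ici_ladder_zero, Nat.card_unique]; rfl
  | d + 1 => by
    rw [← Nat.card_eq_of_bijective _ (iciLadderSuccOfSum_bijective d), Nat.card_sum,
      Nat.card_prod, card_Ici_ladder d, seqB]
    ring

abbrev HasseEdge (d : ℕ) : Type := {p : DForest × DForest // ladder d ≤ p.1 ∧ p.1 ⋖ p.2}

theorem isEmpty_hasseEdge_zero : IsEmpty (HasseEdge 0) := by
  refine ⟨fun ⟨⟨x, y⟩, hx, hxy⟩ => ?_⟩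
  obtain rfl := eq_nil_of_nil_le hx
  obtain rfl := eq_nil_of_nil_le hxy.le
  exact hxy.lt.ne rfl

def hasseEdgeSuccOfSum (d : ℕ) :
    (HasseEdge d ⊕ Ici (ladder d)) ⊕
      (HasseEdge d × Ici (ladder d) ⊕ Ici (ladder d) × HasseEdge d) → HasseEdge (d + 1) :=
  Sum.elim
    (Sum.elim
      (fun e => ⟨(whiteNode e.1.1, whiteNode e.1.2), whiteNode_mono e.2.1,
        whiteNode_covBy_whiteNode_iff.2 e.2.2⟩)
      fun c => ⟨(whiteNode c, blackNode c c), whiteNode_mono c.2,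
        (whiteNode_covBy_blackNode_iff rfl).2 ⟨rfl, rfl⟩⟩)
    (Sum.elim
      (fun q => ⟨(blackNode q.1.1.1 q.2, blackNode q.1.1.2 q.2),
        ladder_succ_le_blackNode q.1.2.1 q.2.2,
        (blackNode_covBy_blackNode_iff (len_eq_of_le q.1.2.2.le)).2
          (Prod.mk_covBy_mk_iff_left.2 q.1.2.2)⟩)
      fun q => ⟨(blackNode q.1 q.2.1.1, blackNode q.1 q.2.1.2),
        ladder_succ_le_blackNode q.1.2 q.2.2.1,
        (blackNode_covBy_blackNode_iff rfl).2 (Prod.mk_covBy_mk_iff_right.2 q.2.2.2)⟩)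

theorem hasseEdgeSuccOfSum_injective (d : ℕ) : Function.Injective (hasseEdgeSuccOfSum d) := by
  refine .sumElim (.sumElim ?_ ?_ ?_) (.sumElim ?_ ?_ ?_) ?_ <;>
    simp only [Function.Injective, ne_eq, Sum.forall, Prod.forall, Subtype.forall, Sum.elim_inl,
      Sum.elim_inr, Subtype.mk.injEq, Prod.mk.injEq, whiteNode_ne_blackNode, and_false,
      false_and, not_false_eq_true, implies_true, and_self]
  · rintro a b - a' b' - ⟨h, h'⟩
    exact ⟨whiteNode_injective h, whiteNode_injective h'⟩
  · rintro c - c' - ⟨h, -⟩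
    exact whiteNode_injective h
  · rintro a b ⟨ha, hab⟩ g - a' b' ⟨ha', hab'⟩ g' - ⟨h, h'⟩
    obtain ⟨rfl, rfl⟩ := (blackNode_inj (len_eq_of_ladder_le ha ha')).1 h
    obtain ⟨rfl, -⟩ := (blackNode_inj (len_eq_of_ladder_le (ha.trans hab.le)
      (ha.trans hab'.le))).1 h'
    exact ⟨⟨rfl, rfl⟩, rfl⟩
  · rintro g hg a b - g' hg' a' b' - ⟨h, h'⟩
    obtain ⟨rfl, rfl⟩ := (blackNode_inj (len_eq_of_ladder_le hg hg')).1 h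
    exact ⟨rfl, rfl, ((blackNode_inj rfl).1 h').2⟩
  · rintro a b ⟨ha, hab⟩ g - g' hg' a' b' - ⟨h, h'⟩
    have hag' := ((blackNode_inj (len_eq_of_ladder_le ha hg')).1 h).1
    have hbg' := ((blackNode_inj (len_eq_of_ladder_le (ha.trans hab.le) hg')).1 h').1
    exact hab.ne (hag'.trans hbg'.symm)

theorem hasseEdgeSuccOfSum_surjective (d : ℕ) : Function.Surjective (hasseEdgeSuccOfSum d) := by
  rintro ⟨⟨x, y⟩, hx, hxy⟩
  have hy : ladder (d + 1) ≤ y := hx.trans hxy.le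
  rw [ladder_succ] at hx hy
  rcases whiteNode_le_cases hx with ⟨c, hc, rfl⟩ | ⟨f, g, -, hf, hg, rfl⟩ <;>
    rcases whiteNode_le_cases hy with ⟨c', hc', rfl⟩ | ⟨f', g', -, hf', hg', rfl⟩
  · exact ⟨.inl (.inl ⟨(c, c'), hc, whiteNode_covBy_whiteNode_iff.1 hxy⟩), rfl⟩
  · obtain ⟨rfl, rfl⟩ := (whiteNode_covBy_blackNode_iff (len_eq_of_ladder_le hc hf')).1 hxy
    exact ⟨.inl (.inr ⟨_, hc⟩), rfl⟩
  · exact absurd hxy.le (not_blackNode_le_whiteNode _ _ _)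
  · rcases Prod.mk_covBy_mk_iff.1
      ((blackNode_covBy_blackNode_iff (len_eq_of_ladder_le hf hf')).1 hxy)
      with ⟨hff', rfl⟩ | ⟨hgg', rfl⟩
    · exact ⟨.inr (.inl (⟨(f, f'), hf, hff'⟩, ⟨g, hg⟩)), rfl⟩
    · exact ⟨.inr (.inr (⟨f, hf⟩, ⟨(g, g'), hg, hgg'⟩)), rfl⟩

instance finite_hasseEdge : ∀ d, Finite (HasseEdge d)
  | 0 => have := isEmpty_hasseEdge_zero; inferInstance
  | d + 1 =>
    have := finite_hasseEdge d
    .of_surjective _ (hasseEdgeSuccOfSum_surjective d)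

theorem card_hasseEdge : ∀ d, Nat.card (HasseEdge d) = seqC d
  | 0 => by have := isEmpty_hasseEdge_zero; simp [seqC]
  | d + 1 => by
    rw [← Nat.card_eq_of_bijective _
      ⟨hasseEdgeSuccOfSum_injective d, hasseEdgeSuccOfSum_surjective d⟩]
    simp only [Nat.card_sum, Nat.card_prod, card_hasseEdge d, card_Ici_ladder d, seqC]
    ring

/-- The number of covering relations (Hasse diagram edges) of the poset D*(l_d)
equals c(d); the first values of these edge counts, starting with the Hasse diagram of
the Mockingbird lattice M(0) (which corresponds to D*(l_{d-1}), whence the shift), are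
0, 0, 1, 7, 97, 8287, i.e. c(0) = 0, c(1) = 1, c(2) = 7, c(3) = 97, c(4) = 8287. -/
theorem ladder_hasse_edges :
    (∀ d : ℕ,
      Nat.card {p : DForest × DForest //
        FLe (ladder d) p.1 ∧ FLe p.1 p.2 ∧ p.1 ≠ p.2 ∧
        ∀ h : DForest, FLe p.1 h → FLe h p.2 → h = p.1 ∨ h = p.2} = seqC d) ∧
    seqC 0 = 0 ∧ seqC 1 = 1 ∧ seqC 2 = 7 ∧ seqC 3 = 97 ∧ seqC 4 = 8287 := by
  refine ⟨fun d => ?_, rfl, rfl, rfl, rfl, rfl⟩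
  rw [← card_hasseEdge d]
  refine Nat.card_congr (Equiv.subtypeEquivRight fun p => ?_)
  rw [covBy_iff_lt_and_eq_or_eq, lt_iff_le_and_ne, and_assoc]
  rfl
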